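/- The non-permutability graph of subgroups of A₄ has 7 vertices: the four subgroups of order 3 and the three subgroups of order 2; its edge set consists of all pairs except the three pairs of distinct order-2 subgroups, giving 18 edges. -/

import Mathlib

open scoped Pointwise

/-- The subgroup commutativity degree of `G`: the probability that two
randomly chosen subgroups of `G` permute (setwise product). -/
noncomputable def sd (G : Type*) [Group G] : ℚ :=
  (Nat.card {p : Subgroup G × Subgroup G //
      (p.1 : Set G) * (p.2 : Set G) = (p.2 : Set G) * (p.1 : Set G)} : ℚ) /
    (Nat.card (Subgroup G) : ℚ) ^ 2

/-- The factorization number of `G`: the number of ordered pairs of subgroups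
`(H, K)` with `HK = G` (setwise product). -/
noncomputable def F₂ (G : Type*) [Group G] : ℕ :=
  Nat.card {p : Subgroup G × Subgroup G //
      (p.1 : Set G) * (p.2 : Set G) = (Set.univ : Set G)}

/-- The smallest sublattice of the subgroup lattice of `G` containing all
subgroups that permute with every subgroup of `G`. -/
def permCenter (G : Type*) [Group G] : Set (Subgroup G) :=
  latticeClosure {Y : Subgroup G |
    ∀ X : Subgroup G, (X : Set G) * (Y : Set G) = (Y : Set G) * (X : Set G)}

/-- The non-permutability graph of subgroups of `G`, with vertices
`L(G) \ permCenter G` and edges joining `X, Y` with `XY ≠ YX`. -/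
def npGraph (G : Type*) [Group G] : SimpleGraph {X : Subgroup G // X ∉ permCenter G} where
  Adj X Y := (X.1 : Set G) * (Y.1 : Set G) ≠ (Y.1 : Set G) * (X.1 : Set G)
  symm := ⟨fun _ _ h => Ne.symm h⟩
  loopless := ⟨fun _ h => h rfl⟩

/-!
The subgroups of `A₄` permuting with every subgroup are exactly its normal subgroups
`1, V₄, A₄`, which already form a sublattice; every other subgroup has order 2 or 3, since
`A₄` has no subgroup of order 6 and `V₄` is its only subgroup of order 4.
If two subgroups `X, Y` with `X ⊓ Y = ⊥` permute, then `XY` is a subgroup of order `|X| |Y|`.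
This rules out permutability of a subgroup of order 2 with one of order 3 (order 6) and of two
distinct subgroups of order 3 (order 9 does not divide 12), while subgroups of order 2 lie in the
abelian `V₄` and permute. Counting the 3 elements of order 2 and the 8 of order 3 gives
3 + 4 = 7 vertices, and the graph is complete except on the three vertices of order 2:
21 - 3 = 18 edges.
-/

namespace Subgroup

variable {G : Type*} [Group G]

theorem coe_sup_eq_mul_of_mul_comm {X Y : Subgroup G} (h : (X : Set G) * Y = Y * X) :
    ((X ⊔ Y : Subgroup G) : Set G) = X * Y := by
  have hmul : ((X : Set G) * Y) * (X * Y) = X * Y :=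
    calc ((X : Set G) * Y) * (X * Y) = X * (Y * X) * Y := by simp only [mul_assoc]
      _ = (X * X) * (Y * Y) := by rw [← h]; simp only [mul_assoc]
      _ = X * Y := by rw [coe_mul_coe, coe_mul_coe]
  have hinv : ((X : Set G) * Y)⁻¹ = X * Y := by
    rw [mul_inv_rev, inv_coe_set, inv_coe_set, h]
  let XY : Subgroup G :=
    { carrier := X * Y
      one_mem' := ⟨1, X.one_mem, 1, Y.one_mem, mul_one 1⟩
      mul_mem' := fun ha hb => hmul ▸ Set.mul_mem_mul ha hb
      inv_mem' := fun ha => hinv ▸ Set.inv_mem_inv.2 ha }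
  have hXY : X ⊔ Y = XY := le_antisymm
    (sup_le (fun x hx => ⟨x, hx, 1, Y.one_mem, mul_one x⟩)
      (fun y hy => ⟨1, X.one_mem, y, hy, one_mul y⟩))
    (fun _ ⟨_, hx, _, hy, hxy⟩ => hxy ▸ mul_mem_sup hx hy)
  rw [hXY]
  rfl

theorem card_mul_of_disjoint {X Y : Subgroup G} (h : Disjoint X Y) :
    Nat.card ↥((X : Set G) * (Y : Set G)) = Nat.card X * Nat.card Y := by
  have hinj : Function.Injective fun p : X × Y => (p.1 : G) * p.2 := by
    rintro ⟨x, y⟩ ⟨x', y'⟩ (hxy : (x : G) * y = x' * y')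
    have hmem : (x' : G)⁻¹ * x ∈ X ⊓ Y := ⟨X.mul_mem (X.inv_mem x'.2) x.2, by
      rw [show (x' : G)⁻¹ * x = y' * (y : G)⁻¹ by
        rw [inv_mul_eq_iff_eq_mul, ← mul_assoc, ← hxy, mul_inv_cancel_right]]
      exact Y.mul_mem y'.2 (Y.inv_mem y.2)⟩
    rw [disjoint_iff.1 h, mem_bot, inv_mul_eq_one] at hmem
    obtain rfl : x' = x := Subtype.ext hmem
    exact Prod.ext rfl (Subtype.ext (mul_left_cancel hxy))
  have hrange : Set.range (fun p : X × Y => (p.1 : G) * p.2) = (X : Set G) * Y := by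
    ext g
    simp [Set.mem_mul]
  rw [← hrange, Nat.card_range_of_injective hinj, Nat.card_prod]

theorem card_sup_of_mul_comm {X Y : Subgroup G} (h : (X : Set G) * Y = Y * X)
    (hdisj : Disjoint X Y) : Nat.card ↥(X ⊔ Y) = Nat.card X * Nat.card Y := by
  rw [← card_mul_of_disjoint hdisj, ← coe_sup_eq_mul_of_mul_comm h]
  rfl

theorem mul_comm_of_forall_commute {X Y : Subgroup G}
    (h : ∀ x ∈ X, ∀ y ∈ Y, Commute x y) : (X : Set G) * Y = Y * X := by
  ext g
  constructor
  · rintro ⟨x, hx, y, hy, rfl⟩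
    exact ⟨y, hy, x, hx, (h x hx y hy).eq.symm⟩
  · rintro ⟨y, hy, x, hx, rfl⟩
    exact ⟨x, hx, y, hy, (h x hx y hy).eq⟩

theorem disjoint_of_card_prime_of_ne {p : ℕ} (hp : p.Prime) {X Y : Subgroup G}
    (hX : Nat.card X = p) (hY : Nat.card Y = p) (hne : X ≠ Y) : Disjoint X Y := by
  have : Finite X := Nat.finite_of_card_ne_zero (hX ▸ hp.ne_zero)
  have : Finite Y := Nat.finite_of_card_ne_zero (hY ▸ hp.ne_zero)
  rw [disjoint_iff, ← card_eq_one]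
  refine ((Nat.dvd_prime hp).1 (hX ▸ card_dvd_of_le inf_le_left)).resolve_right
    fun hcard => hne ?_
  exact (eq_of_le_of_card_ge inf_le_left (by rw [hX, hcard])).symm.trans
    (eq_of_le_of_card_ge inf_le_right (by rw [hY, hcard]))

theorem orderOf_eq_of_mem_of_card_prime {p : ℕ} (hp : p.Prime) {H : Subgroup G}
    (hH : Nat.card H = p) {g : G} (hg : g ∈ H) (hg1 : g ≠ 1) : orderOf g = p :=
  ((Nat.dvd_prime hp).1 (hH ▸ orderOf_dvd_natCard H hg)).resolve_left
    (orderOf_eq_one_iff.not.2 hg1)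

theorem card_orderOf_eq_prime [Finite G] {p : ℕ} [hp : Fact p.Prime] :
    Nat.card {g : G // orderOf g = p} = (p - 1) * Nat.card {H : Subgroup G // Nat.card H = p} := by
  have := Fintype.ofFinite (Subgroup G)
  have hfiber (H : Subgroup G) : Nat.card {g : G // g ∈ H ∧ g ≠ 1} = Nat.card H - 1 := by
    rw [← SetLike.coe_sort_coe, Nat.card_coe_set_eq,
      ← Set.ncard_sdiff_singleton_of_mem H.one_mem]
    rfl
  -- a subgroup of order `p` is generated by each of its `p - 1` nontrivial elements
  let e : {g : G // orderOf g = p} ≃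
      Σ H : {H : Subgroup G // Nat.card H = p}, {g : G // g ∈ H.1 ∧ g ≠ 1} :=
    { toFun := fun g => ⟨⟨zpowers g.1, by rw [Nat.card_zpowers, g.2]⟩,
        ⟨g.1, mem_zpowers g.1, fun h1 => hp.out.one_lt.ne' (by rw [← g.2, h1, orderOf_one])⟩⟩
      invFun := fun x => ⟨x.2.1, orderOf_eq_of_mem_of_card_prime hp.out x.1.2 x.2.2.1 x.2.2.2⟩
      left_inv := fun _ => rfl
      right_inv := fun x => Sigma.subtype_ext (Subtype.ext (eq_of_le_of_card_ge
        (zpowers_le.2 x.2.2.1) (by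
          rw [x.1.2, Nat.card_zpowers,
            orderOf_eq_of_mem_of_card_prime hp.out x.1.2 x.2.2.1 x.2.2.2]))) rfl }
  rw [Nat.card_congr e, Nat.card_sigma, Finset.sum_congr rfl fun H _ => by rw [hfiber, H.2],
    Finset.sum_const, Finset.card_univ, ← Nat.card_eq_fintype_card, smul_eq_mul, mul_comm]

end Subgroup

theorem SimpleGraph.card_edgeSet_add_choose_two_of_adj_iff {V : Type*} [Finite V]
    (G : SimpleGraph V) (p : V → Prop) (hG : ∀ x y, G.Adj x y ↔ x ≠ y ∧ ¬(p x ∧ p y)) :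
    Nat.card G.edgeSet + (Nat.card {x // p x}).choose 2 = (Nat.card V).choose 2 := by
  classical
  have := Fintype.ofFinite V
  let K := (⊤ : SimpleGraph {x // p x}).map (Function.Embedding.subtype p)
  have hGK : G = ⊤ \ K := by
    ext x y
    simp only [hG, sdiff_adj, top_adj, K, map_adj, Function.Embedding.subtype_apply]
    constructor
    · rintro ⟨hxy, hp⟩
      exact ⟨hxy, fun ⟨a, b, _, ha, hb⟩ => hp ⟨ha ▸ a.2, hb ▸ b.2⟩⟩
    · rintro ⟨hxy, hK⟩
      exact ⟨hxy, fun ⟨hx, hy⟩ =>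
        hK ⟨⟨x, hx⟩, ⟨y, hy⟩, fun h => hxy (congrArg Subtype.val h), rfl, rfl⟩⟩
  subst hGK
  have hK : K.edgeFinset.card = (Nat.card {x // p x}).choose 2 := by
    rw [card_edgeFinset_map, card_edgeFinset_top_eq_card_choose_two, Nat.card_eq_fintype_card]
  have hKle := Finset.card_le_card (edgeFinset_mono (le_top : K ≤ ⊤))
  rw [Nat.card_eq_fintype_card, ← edgeFinset_card, edgeFinset_sdiff,
    Finset.card_sdiff_of_subset (edgeFinset_mono le_top), ← hK, Nat.card_eq_fintype_card,
    ← card_edgeFinset_top_eq_card_choose_two]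
  omega

theorem permCenter_eq_setOf_normal {G : Type*} [Group G]
    (h : ∀ Y : Subgroup G,
      (∀ X : Subgroup G, (X : Set G) * (Y : Set G) = (Y : Set G) * (X : Set G)) → Y.Normal) :
    permCenter G = {X | X.Normal} := by
  have hS : {Y : Subgroup G |
      ∀ X : Subgroup G, (X : Set G) * (Y : Set G) = (Y : Set G) * (X : Set G)} =
      {X | X.Normal} :=
    Set.ext fun Y => ⟨h Y, fun hY X => Subgroup.set_mul_normal_comm (hN := hY) (X : Set G) Y⟩
  rw [permCenter, hS]
  exact IsSublattice.latticeClosure_eq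
    ⟨fun X hX Y hY => Subgroup.sup_normal (hH := hX) (hK := hY) X Y,
      fun X hX Y hY => Subgroup.normal_inf_normal (hH := hX) (hK := hY) X Y⟩

namespace A4

open Subgroup alternatingGroup

local notation "A₄" => alternatingGroup (Fin 4)
local notation "V₄" => kleinFour (Fin 4)

theorem card_eq_twelve : Nat.card A₄ = 12 := card_of_card_eq_four (by simp)

theorem card_orderOf_eq_two : Nat.card {g : A₄ // orderOf g = 2} = 3 := by
  simp_rw [orderOf_eq_prime_iff]
  rw [Nat.card_eq_fintype_card]
  decide

theorem card_orderOf_eq_three : Nat.card {g : A₄ // orderOf g = 3} = 8 := by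
  simp_rw [orderOf_eq_prime_iff]
  rw [Nat.card_eq_fintype_card]
  decide

theorem card_subgroups_two : Nat.card {H : Subgroup A₄ // Nat.card H = 2} = 3 := by
  have := card_orderOf_eq_prime (G := A₄) (p := 2)
  rw [card_orderOf_eq_two] at this
  omega

theorem card_subgroups_three : Nat.card {H : Subgroup A₄ // Nat.card H = 3} = 4 := by
  have := card_orderOf_eq_prime (G := A₄) (p := 3)
  rw [card_orderOf_eq_three] at this
  omega

theorem card_subgroup_ne_six (H : Subgroup A₄) : Nat.card H ≠ 6 := by
  intro h6
  have hindex : H.index = 2 := by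
    have := H.card_mul_index
    rw [h6, card_eq_twelve] at this
    omega
  -- a subgroup of index 2 contains every square, and `g = (g ^ 2) ^ 2` when `g ^ 3 = 1`
  have hcube : {g : A₄ | g ^ 3 = 1} ⊆ H := fun g (hg : g ^ 3 = 1) => by
    have : g = (g ^ 2) ^ 2 := by rw [← pow_mul, pow_succ _ 3, hg, one_mul]
    exact this ▸ sq_mem_of_index_two hindex _
  have hle := Nat.card_mono (H : Set A₄).toFinite hcube
  have h9 : Nat.card {g : A₄ | g ^ 3 = 1} = 9 := by
    rw [Nat.card_eq_fintype_card]
    decide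
  rw [h9] at hle
  change 9 ≤ Nat.card H at hle
  omega

theorem le_kleinFour_of_isPGroup {H : Subgroup A₄} (hH : IsPGroup 2 H) : H ≤ V₄ := by
  obtain ⟨S, hS⟩ := hH.exists_le_sylow
  exact two_sylow_eq_kleinFour_of_card_eq_four (by simp) S ▸ hS

theorem eq_kleinFour_of_card_eq_four {H : Subgroup A₄} (h : Nat.card H = 4) : H = V₄ :=
  eq_of_le_of_card_ge (le_kleinFour_of_isPGroup (IsPGroup.of_card (n := 2) h))
    (by rw [h, kleinFour_card_of_card_eq_four (by simp)])

theorem eq_bot_or_kleinFour_or_top (H : Subgroup A₄) (h2 : Nat.card H ≠ 2)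
    (h3 : Nat.card H ≠ 3) : H = ⊥ ∨ H = V₄ ∨ H = ⊤ := by
  have hdvd : Nat.card H ∈ Nat.divisors 12 :=
    Nat.mem_divisors.2 ⟨card_eq_twelve ▸ H.card_subgroup_dvd_card, by norm_num⟩
  rw [show Nat.divisors 12 = {1, 2, 3, 4, 6, 12} by decide] at hdvd
  simp only [Finset.mem_insert, Finset.mem_singleton] at hdvd
  rcases hdvd with h | h | h | h | h | h
  · exact .inl (card_eq_one.1 h)
  · exact absurd h h2
  · exact absurd h h3
  · exact .inr (.inl (eq_kleinFour_of_card_eq_four h))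
  · exact absurd h (card_subgroup_ne_six H)
  · exact .inr (.inr ((card_eq_iff_eq_top H).1 (h.trans card_eq_twelve.symm)))

theorem normal_of_card_ne_two_of_ne_three {H : Subgroup A₄} (h2 : Nat.card H ≠ 2)
    (h3 : Nat.card H ≠ 3) : H.Normal := by
  rcases eq_bot_or_kleinFour_or_top H h2 h3 with rfl | rfl | rfl
  · infer_instance
  · exact normal_kleinFour (by simp)
  · infer_instance

theorem mul_ne_mul_of_card_two_of_card_three {X Y : Subgroup A₄} (hX : Nat.card X = 2)
    (hY : Nat.card Y = 3) : (X : Set A₄) * (Y : Set A₄) ≠ (Y : Set A₄) * (X : Set A₄) :=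
  fun h => card_subgroup_ne_six (X ⊔ Y) <| by
    rw [card_sup_of_mul_comm h (disjoint_of_coprime_natCard (by rw [hX, hY]; decide)), hX, hY]

theorem mul_ne_mul_of_card_three {X Y : Subgroup A₄} (hX : Nat.card X = 3) (hY : Nat.card Y = 3)
    (hne : X ≠ Y) : (X : Set A₄) * (Y : Set A₄) ≠ (Y : Set A₄) * (X : Set A₄) := fun h => by
  have := card_eq_twelve ▸ card_subgroup_dvd_card (X ⊔ Y)
  rw [card_sup_of_mul_comm h (disjoint_of_card_prime_of_ne Nat.prime_three hX hY hne), hX, hY]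
    at this
  norm_num at this

theorem mul_comm_of_card_two {X Y : Subgroup A₄} (hX : Nat.card X = 2) (hY : Nat.card Y = 2) :
    (X : Set A₄) * (Y : Set A₄) = (Y : Set A₄) * (X : Set A₄) := by
  have hV : ∀ {H : Subgroup A₄}, Nat.card H = 2 → H ≤ V₄ := fun hH =>
    le_kleinFour_of_isPGroup (IsPGroup.of_card (n := 1) hH)
  have hcomm := (kleinFour_isKleinFour (α := Fin 4) (by simp)).isMulCommutative.is_comm
  exact mul_comm_of_forall_commute fun x hx y hy =>
    congrArg Subtype.val (hcomm.comm (⟨x, hV hX hx⟩ : V₄) ⟨y, hV hY hy⟩)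

theorem exists_mul_ne_mul {Y : Subgroup A₄} (hY : Nat.card Y = 2 ∨ Nat.card Y = 3) :
    ∃ X : Subgroup A₄, (X : Set A₄) * (Y : Set A₄) ≠ (Y : Set A₄) * (X : Set A₄) := by
  have : Nontrivial {H : Subgroup A₄ // Nat.card H = 3} := by
    rw [← Finite.one_lt_card_iff_nontrivial, card_subgroups_three]
    norm_num
  obtain ⟨X, hXY, hX⟩ : ∃ X : Subgroup A₄, X ≠ Y ∧ Nat.card X = 3 := by
    obtain ⟨⟨X₁, h₁⟩, ⟨X₂, h₂⟩, hne⟩ := exists_pair_ne {H : Subgroup A₄ // Nat.card H = 3}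
    by_cases h : X₁ = Y
    · exact ⟨X₂, fun h' => hne (Subtype.ext (h.trans h'.symm)), h₂⟩
    · exact ⟨X₁, h, h₁⟩
  refine ⟨X, ?_⟩
  rcases hY with hY | hY
  · exact (mul_ne_mul_of_card_two_of_card_three hY hX).symm
  · exact mul_ne_mul_of_card_three hX hY hXY

theorem normal_iff_card (Y : Subgroup A₄) :
    Y.Normal ↔ ¬(Nat.card Y = 2 ∨ Nat.card Y = 3) := by
  refine ⟨fun hN hY => ?_, fun h => not_or.1 h |>.elim normal_of_card_ne_two_of_ne_three⟩
  obtain ⟨X, hX⟩ := exists_mul_ne_mul hY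
  exact hX (set_mul_normal_comm _ _)

theorem permCenter_eq : permCenter A₄ = {X | X.Normal} :=
  permCenter_eq_setOf_normal fun Y hY =>
    (normal_iff_card Y).2 fun h => (exists_mul_ne_mul h).elim fun X hX => hX (hY X)

theorem not_mem_permCenter_iff (X : Subgroup A₄) :
    X ∉ permCenter A₄ ↔ Nat.card X = 2 ∨ Nat.card X = 3 := by
  rw [permCenter_eq, Set.mem_ofPred_eq, normal_iff_card, not_not]

theorem mul_ne_mul_iff {X Y : Subgroup A₄} (hX : Nat.card X = 2 ∨ Nat.card X = 3)
    (hY : Nat.card Y = 2 ∨ Nat.card Y = 3) :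
    (X : Set A₄) * (Y : Set A₄) ≠ (Y : Set A₄) * (X : Set A₄) ↔
      X ≠ Y ∧ ¬(Nat.card X = 2 ∧ Nat.card Y = 2) := by
  refine ⟨fun h => ⟨fun hXY => h (hXY ▸ rfl), fun ⟨hX₂, hY₂⟩ =>
    h (mul_comm_of_card_two hX₂ hY₂)⟩, fun ⟨hne, hnot⟩ => ?_⟩
  rcases hX with hX | hX <;> rcases hY with hY | hY
  · exact absurd ⟨hX, hY⟩ hnot
  · exact mul_ne_mul_of_card_two_of_card_three hX hY
  · exact (mul_ne_mul_of_card_two_of_card_three hY hX).symm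
  · exact mul_ne_mul_of_card_three hX hY hne

theorem card_npGraph_verts : Nat.card {X : Subgroup A₄ // X ∉ permCenter A₄} = 7 := by
  classical
  simp_rw [not_mem_permCenter_iff]
  rw [Nat.card_congr (subtypeOrEquiv _ _ fun _ h₂ h₃ X hX =>
      absurd ((h₂ X hX).symm.trans (h₃ X hX)) (by decide)),
    Nat.card_sum, card_subgroups_two, card_subgroups_three]

theorem card_npGraph_edgeSet : Nat.card (npGraph A₄).edgeSet = 18 := by
  have hadj (X Y : {X : Subgroup A₄ // X ∉ permCenter A₄}) :
      (npGraph A₄).Adj X Y ↔ X ≠ Y ∧ ¬(Nat.card X.1 = 2 ∧ Nat.card Y.1 = 2) :=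
    (mul_ne_mul_iff ((not_mem_permCenter_iff _).1 X.2) ((not_mem_permCenter_iff _).1 Y.2)).trans
      (and_congr_left' Subtype.ext_iff.not.symm)
  have h := (npGraph A₄).card_edgeSet_add_choose_two_of_adj_iff _ hadj
  rw [Nat.card_congr (Equiv.subtypeSubtypeEquivSubtype fun hX =>
      (not_mem_permCenter_iff _).2 (.inl hX)),
    card_subgroups_two, card_npGraph_verts] at h
  simp only [Nat.choose_two_right] at h
  omega

end A4

theorem stmt16 :
    ({X : Subgroup (alternatingGroup (Fin 4)) | X ∉ permCenter (alternatingGroup (Fin 4))} =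
        {X : Subgroup (alternatingGroup (Fin 4)) | Nat.card X = 2 ∨ Nat.card X = 3}) ∧
      Nat.card {X : Subgroup (alternatingGroup (Fin 4)) //
        X ∉ permCenter (alternatingGroup (Fin 4))} = 7 ∧
      (∀ X Y : Subgroup (alternatingGroup (Fin 4)),
        X ∉ permCenter (alternatingGroup (Fin 4)) →
        Y ∉ permCenter (alternatingGroup (Fin 4)) →
        ((X : Set (alternatingGroup (Fin 4))) * (Y : Set (alternatingGroup (Fin 4))) ≠
            (Y : Set (alternatingGroup (Fin 4))) * (X : Set (alternatingGroup (Fin 4))) ↔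
          X ≠ Y ∧ ¬(Nat.card X = 2 ∧ Nat.card Y = 2))) ∧
      Nat.card (npGraph (alternatingGroup (Fin 4))).edgeSet = 18 :=
  ⟨Set.ext A4.not_mem_permCenter_iff, A4.card_npGraph_verts,
    fun _ _ hX hY => A4.mul_ne_mul_iff ((A4.not_mem_permCenter_iff _).1 hX)
      ((A4.not_mem_permCenter_iff _).1 hY),
    A4.card_npGraph_edgeSet⟩
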